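/- Let L be a finite modular lattice, let l ∈ ℕ, let C ⊆ L_l be a constant height code with minimum distance D(C) ≥ D, and let r := ⌊(D−1)/2⌋. Then for every t ∈ ℕ with max{0, l−r} ≤ t ≤ min{h(1), l+r}, one has |C| ≤ |L_t| / min_{u ∈ L_l} |S(u,r,t)|. -/

import Mathlib

/-- The height of an element: the greatest length of chains from `⊥` to `u`. -/
noncomputable def ht {L : Type*} [Preorder L] (u : L) : ℕ := (Order.height u).toNat

/-- An element `z` is a cycle if the interval `[⊥, z]` is a chain. -/
def IsCycle {L : Type*} [Lattice L] [BoundedOrder L] (z : L) : Prop :=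
  IsChain (· ≤ ·) (Set.Icc (⊥ : L) z)

/-- An element `z` is a dual cycle if the interval `[z, ⊤]` is a chain. -/
def IsDualCycle {L : Type*} [Lattice L] [BoundedOrder L] (z : L) : Prop :=
  IsChain (· ≤ ·) (Set.Icc z (⊤ : L))

/-- A lattice is semi-primary if every element is a join of cycles and a meet of
dual cycles. -/
def IsSemiPrimary (L : Type*) [Lattice L] [BoundedOrder L] : Prop :=
  ∀ u : L, (∃ s : Finset L, (∀ z ∈ s, IsCycle z) ∧ u = s.sup id) ∧
           (∃ s : Finset L, (∀ z ∈ s, IsDualCycle z) ∧ u = s.inf id)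

/-- A finite family of lattice elements is independent. -/
def IndepFun {L : Type*} [Lattice L] [BoundedOrder L] {n : ℕ} (z : Fin n → L) : Prop :=
  ∀ i, ((Finset.univ.erase i).sup z) ⊓ z i = ⊥

/-- A partition is (represented by) a multiset of positive natural numbers. -/
def IsPartition (μ : Multiset ℕ) : Prop := ∀ p ∈ μ, 0 < p

/-- The `i`-th largest part of a partition (0-indexed, 0 if out of range). -/
def partGet (μ : Multiset ℕ) (i : ℕ) : ℕ := ((μ.sort (· ≤ ·)).reverse).getD i 0

/-- Componentwise order on partitions: `μ ≤ λ` iff `μᵢ ≤ λᵢ` for all `i`. -/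
def PartLE (μ lam : Multiset ℕ) : Prop := ∀ i, partGet μ i ≤ partGet lam i

/-- For `λ = (sⁿ)` and `μ ≤ λ`, the partition `λ − μ = (s − μₙ, …, s − μ₁)`. -/
def partSub (s n : ℕ) (μ : Multiset ℕ) : Multiset ℕ :=
  Multiset.filter (fun x => 0 < x)
    (↑((List.range n).map (fun i => s - partGet μ i)) : Multiset ℕ)

/-- `u` has type `μ`: `u` is a join of independent nonzero cycles whose multiset of
heights equals `μ`. -/
def IsTypeOf {L : Type*} [Lattice L] [BoundedOrder L] (u : L) (μ : Multiset ℕ) : Prop :=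
  ∃ (n : ℕ) (z : Fin n → L), (∀ i, IsCycle (z i)) ∧ (∀ i, z i ≠ ⊥) ∧ IndepFun z ∧
    u = Finset.univ.sup z ∧ (↑(List.ofFn (fun i => ht (z i))) : Multiset ℕ) = μ

/-- The lattice metric `d(u,v) = h(u ∨ v) − h(u ∧ v)`. -/
noncomputable def dLat {L : Type*} [Lattice L] (u v : L) : ℕ := ht (u ⊔ v) - ht (u ⊓ v)

/-- The sphere of radius `r` centered at `u`. -/
def sph {L : Type*} [Lattice L] (u : L) (r : ℕ) : Set L := {v | dLat u v ≤ r}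

/-- The `t`-th layer of the sphere of radius `r` centered at `u`. -/
def sphH {L : Type*} [Lattice L] (u : L) (r t : ℕ) : Set L :=
  {v | dLat u v ≤ r ∧ ht v = t}

/-- The elements of type `μ` in the sphere of radius `r` centered at `u`. -/
def sphT {L : Type*} [Lattice L] [BoundedOrder L] (u : L) (r : ℕ) (μ : Multiset ℕ) :
    Set L := {v | dLat u v ≤ r ∧ IsTypeOf v μ}

/-- A finite semi-primary lattice is down-enumerable. -/
def DownEnum (L : Type*) [Lattice L] [BoundedOrder L] : Prop :=
  ∀ (u v : L) (φ μ : Multiset ℕ), IsTypeOf u φ → IsTypeOf v φ →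
    Nat.card {w : L // IsTypeOf w μ ∧ w ≤ u} = Nat.card {w : L // IsTypeOf w μ ∧ w ≤ v}

/-- A finite semi-primary lattice is up-enumerable. -/
def UpEnum (L : Type*) [Lattice L] [BoundedOrder L] : Prop :=
  ∀ (u v : L) (φ μ : Multiset ℕ), IsTypeOf u φ → IsTypeOf v φ →
    Nat.card {w : L // IsTypeOf w μ ∧ u ≤ w} = Nat.card {w : L // IsTypeOf w μ ∧ v ≤ w}

/-- A lattice is enumerable if it is both down- and up-enumerable. -/
def Enumerable (L : Type*) [Lattice L] [BoundedOrder L] : Prop := DownEnum L ∧ UpEnum L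

/-- `α(φ,μ)`: the number of elements of type `μ` below a (any) element of type `φ`. -/
noncomputable def alphaP (L : Type*) [Lattice L] [BoundedOrder L] (φ μ : Multiset ℕ) : ℕ :=
  sSup {n | ∃ u : L, IsTypeOf u φ ∧ n = Nat.card {w : L // IsTypeOf w μ ∧ w ≤ u}}

/-- `β(φ,μ)`: the number of elements of type `μ` above a (any) element of type `φ`. -/
noncomputable def betaP (L : Type*) [Lattice L] [BoundedOrder L] (φ μ : Multiset ℕ) : ℕ :=
  sSup {n | ∃ u : L, IsTypeOf u φ ∧ n = Nat.card {w : L // IsTypeOf w μ ∧ u ≤ w}}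

/-- `α(μ, r₁, …, rₙ)`: the number of chains `x₁ ≤ ⋯ ≤ xₙ ≤ w` with `h(xᵢ) = rᵢ`,
below a (any) element `w` of type `μ`. -/
noncomputable def alphaChain (L : Type*) [Lattice L] [BoundedOrder L] (μ : Multiset ℕ)
    {n : ℕ} (r : Fin n → ℕ) : ℕ :=
  sSup {m | ∃ w : L, IsTypeOf w μ ∧
    m = Nat.card {x : Fin n → L // (∀ i, ht (x i) = r i) ∧ Monotone x ∧ ∀ i, x i ≤ w}}



/-!
Distinct codewords are at distance `> 2r`, so by the triangle inequality the `t`-th layers of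
the radius-`r` spheres around them are pairwise disjoint subsets of `L_t`, each of size at least
`m`; double counting gives `|C| · m ≤ |L_t|`. Moreover `m > 0`: every height in `[l - r, l]` is
attained below any `u ∈ L_l`, and every height in `[l, min (h(1)) (l + r)]` above it.

The triangle inequality comes from the modular identity `h(a ⊔ b) + h(a ⊓ b) = h(a) + h(b)`:
heights are additive along `x ≤ w` (the hard inequality because `y ↦ (y ⊓ x, y ⊔ x)` is
strictly monotone), and the diamond isomorphism `[a ⊓ b, a] ≃ [b, a ⊔ b]` matches the two
relative heights.
-/
namespace Order

section Preorder

variable {α β : Type*} [Preorder α] [Preorder β]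

lemma height_head_add_length_le_height_last (p : LTSeries α) :
    height p.head + p.length ≤ height p.last := by
  induction p using RelSeries.inductionOn with
  | singleton x => simp
  | cons p x hx ih =>
    rw [RelSeries.head_cons, RelSeries.last_cons, RelSeries.cons_length, Nat.cast_add,
      Nat.cast_one, add_comm (p.length : ℕ∞), ← add_assoc]
    exact le_trans (by gcongr; exact height_add_one_le hx) ih

lemma height_add_height_Ici_le (x : α) (y : Set.Ici x) :
    height x + height y ≤ height (y : α) := by
  have : Nonempty {p : LTSeries (Set.Ici x) // p.last = y} :=
    ⟨⟨RelSeries.singleton _ y, rfl⟩⟩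
  rw [height_eq_iSup_last_eq y, iSup_subtype', ENat.add_iSup]
  refine iSup_le fun ⟨p, hp⟩ => ?_
  let q : LTSeries α := p.map Subtype.val fun _ _ h => h
  calc height x + p.length ≤ height q.head + q.length := by gcongr; exacts [p.head.2, le_rfl]
    _ ≤ height q.last := height_head_add_length_le_height_last q
    _ = height (y : α) := by rw [← hp]; rfl

lemma height_prod_le (z : α × β) : height z ≤ height z.1 + height z.2 := by
  refine height_le fun p hp => ?_
  subst hp
  induction p using RelSeries.inductionOn' with
  | singleton x => simp
  | snoc p z hz ih =>
    rw [RelSeries.last_snoc, RelSeries.snoc_length, Nat.cast_add, Nat.cast_one]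
    rcases Prod.lt_iff.mp hz with ⟨h1, h2⟩ | ⟨h1, h2⟩
    · calc (p.length : ℕ∞) + 1 ≤ height p.last.1 + 1 + height p.last.2 := by
            rw [add_right_comm]; gcongr
        _ ≤ height z.1 + height z.2 := add_le_add (height_add_one_le h1) (height_mono h2)
    · calc (p.length : ℕ∞) + 1 ≤ height p.last.1 + (height p.last.2 + 1) := by
            rw [← add_assoc]; gcongr
        _ ≤ height z.1 + height z.2 := add_le_add (height_mono h1) (height_add_one_le h2)

lemma height_Ici_eq_height_Icc {x w : α} (hw : x ≤ w) :
    height (⟨w, hw⟩ : Set.Ici x) = height (⟨w, hw, le_rfl⟩ : Set.Icc x w) :=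
  (height_eq_of_strictMono (fun z : Set.Icc x w => (⟨z, z.2.1⟩ : Set.Ici x)) (fun _ _ h => h)
    (fun a b hb => ⟨⟨b, b.2, (show (b : α) < a from hb).le.trans a.2.2⟩, hb, rfl⟩)
    ⟨w, hw, le_rfl⟩).symm

end Preorder

section ModularLattice

variable {L : Type*} [Lattice L] [IsModularLattice L]

lemma height_le_height_inf_add_height_Ici_sup (x y : L) :
    height y ≤ height (y ⊓ x) + height (⟨y ⊔ x, le_sup_right⟩ : Set.Ici x) := by
  let f : L → L × Set.Ici x := fun y => (y ⊓ x, ⟨y ⊔ x, le_sup_right⟩)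
  have hf : StrictMono f := fun _ _ h => strictMono_inf_prod_sup (z := x) h
  exact (height_le_height_apply_of_strictMono f hf y).trans (height_prod_le (f y))

lemma height_eq_height_add_height_Ici {x w : L} (hw : x ≤ w) :
    height w = height x + height (⟨w, hw⟩ : Set.Ici x) := by
  refine le_antisymm ?_ (height_add_height_Ici_le x ⟨w, hw⟩)
  simpa [inf_eq_right.mpr hw, sup_eq_left.mpr hw] using
    height_le_height_inf_add_height_Ici_sup x w

lemma height_sup_add_height_inf (a b : L) :
    height (a ⊔ b) + height (a ⊓ b) = height a + height b := by
  have diamond : height (⟨a ⊔ b, le_sup_right⟩ : Set.Ici b)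
      = height (⟨a, inf_le_left⟩ : Set.Ici (a ⊓ b)) := by
    rw [height_Ici_eq_height_Icc, height_Ici_eq_height_Icc,
      ← height_orderIso (infIccOrderIsoIccSup a b)]
    rfl
  rw [height_eq_height_add_height_Ici (le_sup_right : b ≤ a ⊔ b),
    height_eq_height_add_height_Ici (inf_le_left : a ⊓ b ≤ a), diamond]
  ring

end ModularLattice

end Order

open Order Finset

section Finite

variable {α : Type*} [Preorder α] [Finite α]

lemma height_ne_top_of_finite (x : α) : height x ≠ ⊤ := by
  have := Fintype.ofFinite α
  refine ne_top_of_le_ne_top (ENat.natCast_ne_top (Fintype.card α)) (height_le fun p _ => ?_)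
  exact_mod_cast p.length_lt_card.le

lemma coe_ht (x : α) : (ht x : ℕ∞) = height x :=
  ENat.natCast_toNat (height_ne_top_of_finite x)

lemma ht_mono : Monotone (ht : α → ℕ) := fun _ _ h => by
  have := height_mono h
  rwa [← coe_ht, ← coe_ht, Nat.cast_le] at this

lemma ht_strictMono : StrictMono (ht : α → ℕ) := fun x _ h => by
  have := height_strictMono h (lt_top_iff_ne_top.mpr (height_ne_top_of_finite x))
  rwa [← coe_ht, ← coe_ht, Nat.cast_lt] at this

lemma exists_le_ht_eq {a : α} {n : ℕ} (hn : n ≤ ht a) : ∃ b ≤ a, ht b = n := by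
  rcases hn.eq_or_lt with rfl | hlt
  · exact ⟨a, le_rfl, rfl⟩
  obtain ⟨b, hba, hb⟩ := (coe_lt_height_iff (lt_top_iff_ne_top.mpr
    (height_ne_top_of_finite a))).mp (by rwa [← coe_ht, Nat.cast_lt])
  exact ⟨b, hba.le, by rwa [← coe_ht, Nat.cast_inj] at hb⟩

end Finite

section ModularLattice

variable {L : Type*} [Lattice L] [IsModularLattice L] [Finite L]

lemma ht_sup_add_ht_inf (a b : L) : ht (a ⊔ b) + ht (a ⊓ b) = ht a + ht b := by
  have := height_sup_add_height_inf a b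
  rwa [← coe_ht, ← coe_ht, ← coe_ht, ← coe_ht, ← Nat.cast_add, ← Nat.cast_add,
    Nat.cast_inj] at this

lemma ht_eq_ht_add_ht_Ici {x w : L} (hw : x ≤ w) :
    ht w = ht x + ht (⟨w, hw⟩ : Set.Ici x) := by
  have := height_eq_height_add_height_Ici hw
  rwa [← coe_ht, ← coe_ht, ← coe_ht, ← Nat.cast_add, Nat.cast_inj] at this

lemma exists_ge_ht_eq [OrderTop L] {a : L} {n : ℕ} (hlo : ht a ≤ n) (hhi : n ≤ ht (⊤ : L)) :
    ∃ b, a ≤ b ∧ ht b = n := by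
  have htop := ht_eq_ht_add_ht_Ici (le_top : a ≤ ⊤)
  obtain ⟨b, -, hb⟩ :=
    exists_le_ht_eq (a := (⟨⊤, le_top⟩ : Set.Ici a)) (n := n - ht a) (by omega)
  exact ⟨b, b.2, by rw [ht_eq_ht_add_ht_Ici b.2, hb]; omega⟩

end ModularLattice

section Metric

variable {L : Type*} [Lattice L]

lemma dLat_comm (u v : L) : dLat u v = dLat v u := by
  rw [dLat, dLat, sup_comm, inf_comm]

lemma dLat_of_le {u v : L} (h : u ≤ v) : dLat u v = ht v - ht u := by
  rw [dLat, sup_eq_right.mpr h, inf_eq_left.mpr h]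

variable [Finite L]

lemma dLat_pos {u v : L} (huv : u ≠ v) : 0 < dLat u v :=
  Nat.sub_pos_of_lt (ht_strictMono (inf_lt_sup.mpr huv))

lemma dLat_triangle [IsModularLattice L] (u v w : L) : dLat u v ≤ dLat u w + dLat w v := by
  have hsup := ht_sup_add_ht_inf (u ⊔ w) (w ⊔ v)
  have hinf := ht_sup_add_ht_inf (u ⊓ w) (w ⊓ v)
  have h₁ : ht (u ⊔ v) ≤ ht ((u ⊔ w) ⊔ (w ⊔ v)) :=
    ht_mono (sup_le_sup le_sup_left le_sup_right)
  have h₂ : ht w ≤ ht ((u ⊔ w) ⊓ (w ⊔ v)) := ht_mono (le_inf le_sup_right le_sup_left)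
  have h₃ : ht ((u ⊓ w) ⊔ (w ⊓ v)) ≤ ht w := ht_mono (sup_le inf_le_right inf_le_left)
  have h₄ : ht ((u ⊓ w) ⊓ (w ⊓ v)) ≤ ht (u ⊓ v) :=
    ht_mono (le_inf (inf_le_left.trans inf_le_left) (inf_le_right.trans inf_le_right))
  have := ht_mono (inf_le_sup : u ⊓ w ≤ u ⊔ w)
  have := ht_mono (inf_le_sup : w ⊓ v ≤ w ⊔ v)
  have := ht_mono (inf_le_sup : u ⊓ v ≤ u ⊔ v)
  simp only [dLat]
  omega

lemma subsingleton_setOf_dLat_le [IsModularLattice L] {C : Set L} {r : ℕ}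
    (hC : C.Pairwise fun u v => 2 * r < dLat u v) (w : L) :
    {u ∈ C | dLat u w ≤ r}.Subsingleton := by
  intro u ⟨hu, huw⟩ v ⟨hv, hvw⟩
  by_contra huv
  have := hC hu hv huv
  have := dLat_triangle u v w
  rw [dLat_comm w v] at this
  omega

lemma sphH_nonempty [IsModularLattice L] [OrderTop L] (u : L) {r t : ℕ}
    (hlo : ht u - r ≤ t) (hhi : t ≤ ht (⊤ : L)) (hr : t ≤ ht u + r) :
    (sphH u r t).Nonempty := by
  rcases le_total t (ht u) with htu | htu
  · obtain ⟨v, hvu, hv⟩ := exists_le_ht_eq htu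
    exact ⟨v, by rw [dLat_comm, dLat_of_le hvu]; omega, hv⟩
  · obtain ⟨v, huv, hv⟩ := exists_ge_ht_eq htu hhi
    exact ⟨v, by rw [dLat_of_le huv]; omega, hv⟩

lemma ncard_mul_le_ncard_of_pairwise [IsModularLattice L] {C : Set L} {r t m : ℕ}
    (hC : C.Pairwise fun u v => 2 * r < dLat u v) (hm : ∀ u ∈ C, m ≤ (sphH u r t).ncard) :
    C.ncard * m ≤ {v : L | ht v = t}.ncard := by
  classical
  have := Fintype.ofFinite L
  let R : L → L → Prop := fun u v => dLat u v ≤ r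
  have habove : ∀ u, (sphH u r t).ncard = #({v : L | ht v = t}.toFinset.bipartiteAbove R u) := by
    intro u
    rw [← Set.ncard_coe_finset]
    congr 1
    ext v
    simp [sphH, R, Finset.bipartiteAbove, and_comm]
  have hbelow : ∀ w, #(C.toFinset.bipartiteBelow R w) ≤ 1 := fun w =>
    Finset.card_le_one.mpr fun u hu v hv => by
      simp only [Finset.bipartiteBelow, Finset.mem_filter, Set.mem_toFinset] at hu hv
      exact subsingleton_setOf_dLat_le hC w hu hv
  have := Finset.card_mul_le_card_mul R (m := m) (n := 1)
    (fun u hu => habove u ▸ hm u (Set.mem_toFinset.mp hu)) (fun w _ => hbelow w)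
  rwa [mul_one, ← Set.ncard_eq_toFinset_card', ← Set.ncard_eq_toFinset_card'] at this

end Metric

/-- Sphere packing bound in a finite modular lattice: for a constant
height code `C ⊆ L_l` with minimum distance at least `D` and `r := ⌊(D−1)/2⌋`, for every
`t` with `max{0, l−r} ≤ t ≤ min{h(1), l+r}` one has
`|C| ≤ |L_t| / min_{u ∈ L_l} |S(u,r,t)|`. -/
theorem stmt13 {L : Type*} [Lattice L] [IsModularLattice L] [BoundedOrder L] [Fintype L]
    (l D : ℕ) (C : Set L) (hC : C ⊆ {v : L | ht v = l})
    (hmin : ∀ u ∈ C, ∀ v ∈ C, u ≠ v → D ≤ dLat u v)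
    (r : ℕ) (hr : r = (D - 1) / 2)
    (t : ℕ) (htl : l - r ≤ t) (htu : t ≤ min (ht (⊤ : L)) (l + r))
    (m : ℕ) (hm : m = sInf {k : ℕ | ∃ u : L, ht u = l ∧ k = (sphH u r t).ncard}) :
    (C.ncard : ℝ) ≤ ({v : L | ht v = t}.ncard : ℝ) / (m : ℝ) := by
  obtain rfl | ⟨u₀, hu₀⟩ := C.eq_empty_or_nonempty
  · simp only [Set.ncard_empty, Nat.cast_zero]
    positivity
  have hm_le : ∀ u ∈ C, m ≤ (sphH u r t).ncard := fun u hu =>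
    hm ▸ Nat.sInf_le ⟨u, hC hu, rfl⟩
  have hm_pos : 0 < m := by
    obtain ⟨u, hu, hmu⟩ : m ∈ {k : ℕ | ∃ u : L, ht u = l ∧ k = (sphH u r t).ncard} :=
      hm ▸ Nat.sInf_mem ⟨_, u₀, hC hu₀, rfl⟩
    rw [hmu, Set.ncard_pos]
    exact sphH_nonempty u (by omega) (by omega) (by omega)
  have hpack : C.Pairwise fun u v => 2 * r < dLat u v := fun u hu v hv huv => by
    have := hmin u hu v hv huv
    have := dLat_pos huv
    omega
  rw [le_div_iff₀ (by exact_mod_cast hm_pos)]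
  exact_mod_cast ncard_mul_le_ncard_of_pairwise hpack hm_le
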